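/- arXiv:2505.19642 — 2 statements merged into one kernel-verified Lean document; each statement's English description precedes it below -/
import Mathlib

section
/- For the r-dimensional hypercube Q_r (r ≥ 1), κ(Q_r) = 2^r, i.e., the minimum over distinct vertex pairs x,y of Σ_{w∈V(Q_r)} |d(x,w)−d(y,w)| equals 2^r. -/
open Finset

lemma hd_sum {r : ℕ} (x w : Fin r → Fin 2) :
    (hammingDist x w : ℤ) = ∑ j : Fin r, (if x j = w j then 0 else 1) := by
  rw [hammingDist, Finset.card_filter]
  push_cast
  apply Finset.sum_congr rfl
  intro j _
  by_cases h : x j = w j <;> simp [h]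

lemma hd_update {r : ℕ} (x w : Fin r → Fin 2) (i : Fin r) (b : Fin 2) :
    (hammingDist x (Function.update w i b) : ℤ) = (hammingDist x w : ℤ)
      - (if x i = w i then 0 else 1) + (if x i = b then 0 else 1) := by
  rw [hd_sum, hd_sum]
  rw [← Finset.add_sum_erase _ _ (Finset.mem_univ i),
      ← Finset.add_sum_erase _ (fun j => if x j = w j then (0:ℤ) else 1) (Finset.mem_univ i)]
  have h1 : ∑ j ∈ univ.erase i, (if x j = Function.update w i b j then (0:ℤ) else 1)
       = ∑ j ∈ univ.erase i, (if x j = w j then (0:ℤ) else 1) := by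
    apply Finset.sum_congr rfl; intro j hj
    rw [Function.update_of_ne (Finset.ne_of_mem_erase hj)]
  rw [h1, Function.update_self]; ring

lemma fin2_add_one_ne (a : Fin 2) : a + 1 ≠ a := by revert a; decide

lemma fin2_ne_imp (a b : Fin 2) (h : b ≠ a) : b = a + 1 := by revert a b; decide

/-- For the `r`-dimensional hypercube `Q_r` with vertex set `{0,1}^r` and Hamming
distance `d`, `κ(Q_r) = min_{x ≠ y} Σ_{w} |d(x,w) − d(y,w)| = 2^r`. -/
theorem stmt4 (r : ℕ) (hr : 1 ≤ r) :
    sInf {d : ℕ | ∃ x y : Fin r → Fin 2, x ≠ y ∧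
        d = ∑ w : Fin r → Fin 2, ((hammingDist x w : ℤ) - (hammingDist y w : ℤ)).natAbs}
      = 2 ^ r := by
  have hcard : Fintype.card (Fin r → Fin 2) = 2 ^ r := by simp
  set i0 : Fin r := ⟨0, hr⟩
  set x0 : Fin r → Fin 2 := fun _ => 0 with hx0
  set y0 : Fin r → Fin 2 := Function.update x0 i0 1 with hy0
  have hne : x0 ≠ y0 := by
    intro h
    have := congrFun h i0
    simp [hy0, Function.update_self, x0] at this
  have hmem : (2 ^ r) ∈ {d : ℕ | ∃ x y : Fin r → Fin 2, x ≠ y ∧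
        d = ∑ w : Fin r → Fin 2, ((hammingDist x w : ℤ) - (hammingDist y w : ℤ)).natAbs} := by
    refine ⟨x0, y0, hne, ?_⟩
    have : ∀ w : Fin r → Fin 2,
        ((hammingDist x0 w : ℤ) - (hammingDist y0 w : ℤ)).natAbs = 1 := by
      intro w
      have h1 : (hammingDist y0 w : ℤ) = (hammingDist x0 w : ℤ)
          - (if w i0 = x0 i0 then 0 else 1) + (if w i0 = 1 then 0 else 1) := by
        rw [hammingDist_comm y0 w, hy0, hd_update, hammingDist_comm w x0]
      rw [h1]
      have : x0 i0 = 0 := rfl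
      rw [this]
      rcases (by decide : ∀ a : Fin 2, a = 0 ∨ a = 1) (w i0) with h2 | h2 <;>
        rw [h2] <;> simp
    rw [Finset.sum_congr rfl (fun w _ => this w), Finset.sum_const, Finset.card_univ, hcard,
      smul_eq_mul, mul_one]
  refine le_antisymm (Nat.sInf_le hmem) (le_csInf ⟨_, hmem⟩ ?_)
  rintro d ⟨x, y, hxy, rfl⟩
  obtain ⟨i, hi⟩ := Function.ne_iff.mp hxy
  set σ : (Fin r → Fin 2) → (Fin r → Fin 2) := fun w => Function.update w i (w i + 1) with hσdef
  have hσinv : Function.Involutive σ := by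
    intro w
    funext j
    by_cases h : j = i
    · subst h
      simp only [σ, Function.update_self]
      exact (by decide : ∀ a : Fin 2, a + 1 + 1 = a) (w j)
    · simp [σ, Function.update_of_ne h]
  have key : ∀ w : Fin r → Fin 2,
      2 ≤ ((hammingDist x w : ℤ) - (hammingDist y w : ℤ)).natAbs
        + ((hammingDist x (σ w) : ℤ) - (hammingDist y (σ w) : ℤ)).natAbs := by
    intro w
    have hx := hd_update x w i (w i + 1)
    have hy := hd_update y w i (w i + 1)
    by_cases h : x i = w i
    · have hyne : y i ≠ w i := by rw [← h]; exact fun e => hi e.symm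
      have hyb : y i = w i + 1 := fin2_ne_imp _ _ hyne
      have hxb : x i ≠ w i + 1 := by rw [h]; exact fun e => fin2_add_one_ne (w i) e.symm
      rw [if_pos h, if_neg hxb] at hx
      rw [if_neg hyne, if_pos hyb] at hy
      simp only [σ] at *
      omega
    · have hxb : x i = w i + 1 := fin2_ne_imp _ _ h
      have hyi : y i = w i := by
        by_contra hc
        exact hi (hxb.trans (fin2_ne_imp _ _ hc).symm)
      have hynb : y i ≠ w i + 1 := by rw [hyi]; exact fun e => fin2_add_one_ne (w i) e.symm
      rw [if_neg h, if_pos hxb] at hx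
      rw [if_pos hyi, if_neg hynb] at hy
      simp only [σ] at *
      omega
  have hsum : ∑ w : Fin r → Fin 2, ((hammingDist x (σ w) : ℤ) - (hammingDist y (σ w) : ℤ)).natAbs
      = ∑ w : Fin r → Fin 2, ((hammingDist x w : ℤ) - (hammingDist y w : ℤ)).natAbs :=
    Equiv.sum_comp hσinv.toPerm fun w => ((hammingDist x w : ℤ) - (hammingDist y w : ℤ)).natAbs
  have h2 : 2 * 2 ^ r ≤ 2 * ∑ w : Fin r → Fin 2,
      ((hammingDist x w : ℤ) - (hammingDist y w : ℤ)).natAbs := by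
    have := Finset.sum_le_sum (fun w (_ : w ∈ univ) => key w)
    rw [Finset.sum_add_distrib, hsum, Finset.sum_const, Finset.card_univ, hcard, smul_eq_mul] at this
    omega
  omega
end

section
/- If n ≥ 3 and 5 ≤ k ≤ 2n−1 with k odd, then wdim_k(K_n □ K_n) = n·⌈k/2⌉ − 1. -/
/-- Distance in `K_n □ K_m`: the number of differing coordinates. -/
def hd {n m : ℕ} (x y : Fin n × Fin m) : ℕ :=
  (if x.1 = y.1 then 0 else 1) + (if x.2 = y.2 then 0 else 1)

/-- `Δ_S(x,y) = Σ_{w ∈ S} |d(x,w) − d(y,w)|`. -/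
def delta {n m : ℕ} (S : Finset (Fin n × Fin m)) (x y : Fin n × Fin m) : ℕ :=
  ∑ w ∈ S, ((hd x w : ℤ) - (hd y w : ℤ)).natAbs

/-- `S` is a weak `k`-resolving set of `K_n □ K_m`. -/
def IsWeakResolving {n m : ℕ} (k : ℕ) (S : Finset (Fin n × Fin m)) : Prop :=
  ∀ x y : Fin n × Fin m, x ≠ y → k ≤ delta S x y

/-- The weak `k`-metric dimension of `K_n □ K_m`. -/
noncomputable def wdim (n m k : ℕ) : ℕ :=
  sInf {c | ∃ S : Finset (Fin n × Fin m), IsWeakResolving k S ∧ S.card = c}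

/-- Number of elements of `S` in row `a`. -/
def rcnt {n m : ℕ} (S : Finset (Fin n × Fin m)) (a : Fin n) : ℕ :=
  (S.filter (fun w => w.1 = a)).card

/-- Number of elements of `S` in column `b`. -/
def ccnt {n m : ℕ} (S : Finset (Fin n × Fin m)) (b : Fin m) : ℕ :=
  (S.filter (fun w => w.2 = b)).card

lemma card_eq_sum_rcnt {n m : ℕ} (S : Finset (Fin n × Fin m)) :
    S.card = ∑ a : Fin n, rcnt S a :=
  Finset.card_eq_sum_card_fiberwise (fun x _ => Finset.mem_univ x.1)

lemma delta_same_col {n m : ℕ} (S : Finset (Fin n × Fin m)) (a c : Fin n) (b : Fin m)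
    (hac : a ≠ c) : delta S (a, b) (c, b) = rcnt S a + rcnt S c := by
  unfold delta rcnt
  rw [Finset.card_filter, Finset.card_filter, ← Finset.sum_add_distrib]
  refine Finset.sum_congr rfl fun w _ => ?_
  simp only [hd]
  by_cases h1 : a = w.1 <;> by_cases h2 : c = w.1 <;> by_cases h3 : b = w.2 <;>
    simp_all [eq_comm]

lemma delta_same_row {n m : ℕ} (S : Finset (Fin n × Fin m)) (a : Fin n) (b d : Fin m)
    (hbd : b ≠ d) : delta S (a, b) (a, d) = ccnt S b + ccnt S d := by
  unfold delta ccnt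
  rw [Finset.card_filter, Finset.card_filter, ← Finset.sum_add_distrib]
  refine Finset.sum_congr rfl fun w _ => ?_
  simp only [hd]
  by_cases h1 : b = w.2 <;> by_cases h2 : d = w.2 <;> by_cases h3 : a = w.1 <;>
    simp_all [eq_comm]

lemma delta_cross {n m : ℕ} (S : Finset (Fin n × Fin m)) (a c : Fin n) (b d : Fin m)
    (hac : a ≠ c) (hbd : b ≠ d) :
    rcnt S a + rcnt S c + (ccnt S b + ccnt S d) ≤ delta S (a, b) (c, d) + 4 := by
  have key : ∀ w ∈ S,
      ((if w.1 = a then 1 else 0) + (if w.1 = c then 1 else 0))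
        + ((if w.2 = b then 1 else 0) + (if w.2 = d then 1 else 0))
      ≤ ((hd (a, b) w : ℤ) - (hd (c, d) w : ℤ)).natAbs
        + (2 * (if w = (a, d) then 1 else 0) + 2 * (if w = (c, b) then 1 else 0)) := by
    intro w _
    simp only [hd, Prod.ext_iff]
    by_cases h1 : a = w.1 <;> by_cases h2 : c = w.1 <;> by_cases h3 : b = w.2 <;>
      by_cases h4 : d = w.2 <;> simp_all [eq_comm]
  have hsum := Finset.sum_le_sum key
  rw [Finset.sum_add_distrib, Finset.sum_add_distrib, Finset.sum_add_distrib,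
    Finset.sum_add_distrib] at hsum
  have e1 : ∑ w ∈ S, (if w = (a, d) then (1 : ℕ) else 0) ≤ 1 := by
    rw [Finset.sum_ite_eq' S (a, d) (fun _ => (1 : ℕ))]
    split <;> omega
  have e2 : ∑ w ∈ S, (if w = (c, b) then (1 : ℕ) else 0) ≤ 1 := by
    rw [Finset.sum_ite_eq' S (c, b) (fun _ => (1 : ℕ))]
    split <;> omega
  have hra : rcnt S a = ∑ w ∈ S, (if w.1 = a then (1 : ℕ) else 0) := Finset.card_filter _ _
  have hrc : rcnt S c = ∑ w ∈ S, (if w.1 = c then (1 : ℕ) else 0) := Finset.card_filter _ _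
  have hcb : ccnt S b = ∑ w ∈ S, (if w.2 = b then (1 : ℕ) else 0) := Finset.card_filter _ _
  have hcd : ccnt S d = ∑ w ∈ S, (if w.2 = d then (1 : ℕ) else 0) := Finset.card_filter _ _
  have e3 : ∑ w ∈ S, (2 * (if w = (a, d) then (1 : ℕ) else 0)
      + 2 * (if w = (c, b) then (1 : ℕ) else 0)) ≤ 4 := by
    rw [Finset.sum_add_distrib, ← Finset.mul_sum, ← Finset.mul_sum]
    omega
  unfold delta
  omega

lemma card_filter_val_lt (n t : ℕ) (ht : t ≤ n) :
    (Finset.univ.filter (fun x : Fin n => x.val < t)).card = t := by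
  rcases eq_or_lt_of_le ht with h | h
  · have he : Finset.univ.filter (fun x : Fin n => x.val < t) = Finset.univ := by
      ext x; simp only [Finset.mem_filter, Finset.mem_univ, true_and, iff_true]
      omega
    rw [he, Finset.card_univ, Fintype.card_fin, h]
  · have he : Finset.univ.filter (fun x : Fin n => x.val < t) = Finset.Iio (⟨t, h⟩ : Fin n) := by
      ext x; simp [Fin.lt_def]
    rw [he, Fin.card_Iio]

/-- If `n ≥ 3` and `k` is odd with `5 ≤ k ≤ 2n−1`, then
`wdim_k(K_n □ K_n) = n·⌈k/2⌉ − 1`. -/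
theorem stmt10 (n k : ℕ) (hn : 3 ≤ n) (hk5 : 5 ≤ k) (hk : k ≤ 2 * n - 1) (hko : Odd k) :
    wdim n n k = n * ((k + 1) / 2) - 1 := by
  obtain ⟨j, hj⟩ := hko
  set t : ℕ := j + 1 with htdef
  have hkt : k = 2 * t - 1 := by omega
  have ht3 : 3 ≤ t := by omega
  have htn : t ≤ n := by omega
  have hkey : (k + 1) / 2 = t := by omega
  haveI : NeZero n := ⟨by omega⟩
  -- The explicit weak k-resolving set of size n*t - 1.
  set S0 : Finset (Fin n × Fin n) :=
    Finset.univ.filter (fun p : Fin n × Fin n => (p.2 - p.1).val < t) with hS0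
  set S : Finset (Fin n × Fin n) := S0.erase (0, 0) with hS
  -- Row counts of S0.
  have hrow0 : ∀ a : Fin n, rcnt S0 a = t := by
    intro a
    have himg : S0.filter (fun w => w.1 = a)
        = {a} ×ˢ (Finset.univ.filter (fun b : Fin n => (b - a).val < t)) := by
      ext ⟨u, v⟩
      simp only [hS0, Finset.mem_filter, Finset.mem_product, Finset.mem_singleton,
        Finset.mem_univ, true_and]
      constructor
      · rintro ⟨h1, h2⟩; subst h2; exact ⟨rfl, h1⟩
      · rintro ⟨h1, h2⟩; subst h1; exact ⟨h2, rfl⟩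
    have hshift : (Finset.univ.filter (fun b : Fin n => (b - a).val < t)).card = t := by
      have hb2 : (Finset.univ.filter (fun b : Fin n => (b - a).val < t)).card
          = (Finset.univ.filter (fun x : Fin n => x.val < t)).card := by
        apply Finset.card_bij' (fun b _ => b - a) (fun x _ => x + a)
        · intro b hb; simp only [Finset.mem_filter, Finset.mem_univ, true_and]
          exact (Finset.mem_filter.mp hb).2
        · intro x hx; simp only [Finset.mem_filter, Finset.mem_univ, true_and]
          have : x + a - a = x := add_sub_cancel_right x a
          rw [this]; exact (Finset.mem_filter.mp hx).2
        · intro b _; exact sub_add_cancel b a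
        · intro x _; exact add_sub_cancel_right x a
      rw [hb2, card_filter_val_lt n t htn]
    rw [rcnt, himg, Finset.card_product, Finset.card_singleton, one_mul, hshift]
  have hcol0 : ∀ b : Fin n, ccnt S0 b = t := by
    intro b
    have himg : S0.filter (fun w => w.2 = b)
        = (Finset.univ.filter (fun a : Fin n => (b - a).val < t)) ×ˢ {b} := by
      ext ⟨u, v⟩
      simp only [hS0, Finset.mem_filter, Finset.mem_product, Finset.mem_singleton,
        Finset.mem_univ, true_and]
      constructor
      · rintro ⟨h1, h2⟩; subst h2; exact ⟨h1, rfl⟩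
      · rintro ⟨h1, h2⟩; subst h2; exact ⟨h1, rfl⟩
    have hshift : (Finset.univ.filter (fun a : Fin n => (b - a).val < t)).card = t := by
      have hb2 : (Finset.univ.filter (fun a : Fin n => (b - a).val < t)).card
          = (Finset.univ.filter (fun x : Fin n => x.val < t)).card := by
        apply Finset.card_bij' (fun a _ => b - a) (fun x _ => b - x)
        · intro a ha; simp only [Finset.mem_filter, Finset.mem_univ, true_and]
          exact (Finset.mem_filter.mp ha).2
        · intro x hx; simp only [Finset.mem_filter, Finset.mem_univ, true_and]
          have : b - (b - x) = x := sub_sub_cancel b x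
          rw [this]; exact (Finset.mem_filter.mp hx).2
        · intro a _; exact sub_sub_cancel b a
        · intro x _; exact sub_sub_cancel b x
      rw [hb2, card_filter_val_lt n t htn]
    rw [ccnt, himg, Finset.card_product, Finset.card_singleton, mul_one, hshift]
  have h00 : ((0 : Fin n), (0 : Fin n)) ∈ S0 := by
    simp only [hS0, Finset.mem_filter, Finset.mem_univ, true_and, sub_self, Fin.val_zero]
    omega
  -- Row counts of S.
  have hrowS : ∀ a : Fin n, rcnt S a = if a = 0 then t - 1 else t := by
    intro a
    rw [rcnt, hS, Finset.filter_erase]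
    by_cases ha : a = 0
    · subst ha
      have hm : ((0 : Fin n), (0 : Fin n)) ∈ S0.filter (fun w : Fin n × Fin n => w.1 = 0) :=
        Finset.mem_filter.mpr ⟨h00, rfl⟩
      rw [Finset.card_erase_of_mem hm,
        show (S0.filter (fun w : Fin n × Fin n => w.1 = 0)).card = rcnt S0 0 from rfl, hrow0]
      simp
    · rw [Finset.erase_eq_of_notMem
        (fun hmem => ha ((Finset.mem_filter.mp hmem).2).symm)]
      simp only [ha, if_false]
      exact hrow0 a
  have hcolS : ∀ b : Fin n, ccnt S b = if b = 0 then t - 1 else t := by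
    intro b
    rw [ccnt, hS, Finset.filter_erase]
    by_cases hb : b = 0
    · subst hb
      have hm : ((0 : Fin n), (0 : Fin n)) ∈ S0.filter (fun w : Fin n × Fin n => w.2 = 0) :=
        Finset.mem_filter.mpr ⟨h00, rfl⟩
      rw [Finset.card_erase_of_mem hm,
        show (S0.filter (fun w : Fin n × Fin n => w.2 = 0)).card = ccnt S0 0 from rfl, hcol0]
      simp
    · rw [Finset.erase_eq_of_notMem
        (fun hmem => hb ((Finset.mem_filter.mp hmem).2).symm)]
      simp only [hb, if_false]
      exact hcol0 b
  -- Cardinality of S.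
  have hcardS0 : S0.card = n * t := by
    rw [card_eq_sum_rcnt]
    simp only [hrow0]
    rw [Finset.sum_const, Finset.card_univ, Fintype.card_fin, smul_eq_mul]
  have hcardS : S.card = n * t - 1 := by
    rw [hS, Finset.card_erase_of_mem h00, hcardS0]
  -- Pairs of rows / columns.
  have hrpair : ∀ a c : Fin n, a ≠ c → 2 * t - 1 ≤ rcnt S a + rcnt S c := by
    intro a c hac
    have ha := hrowS a; have hc := hrowS c
    by_cases h1 : a = 0 <;> by_cases h2 : c = 0 <;> simp_all <;> omega
  have hcpair : ∀ b d : Fin n, b ≠ d → 2 * t - 1 ≤ ccnt S b + ccnt S d := by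
    intro b d hbd
    have hb := hcolS b; have hd := hcolS d
    by_cases h1 : b = 0 <;> by_cases h2 : d = 0 <;> simp_all <;> omega
  -- S is weak k-resolving.
  have hres : IsWeakResolving k S := by
    rintro ⟨x1, x2⟩ ⟨y1, y2⟩ hxy
    by_cases h1 : x1 = y1
    · subst h1
      have h2 : x2 ≠ y2 := by simpa using hxy
      rw [delta_same_row S x1 x2 y2 h2]
      have := hcpair x2 y2 h2
      omega
    · by_cases h2 : x2 = y2
      · subst h2
        rw [delta_same_col S x1 y1 x2 h1]
        have := hrpair x1 y1 h1
        omega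
      · have hcross := delta_cross S x1 y1 x2 y2 h1 h2
        have hr := hrpair x1 y1 h1
        have hc := hcpair x2 y2 h2
        omega
  -- Lower bound.
  have hlb : ∀ c ∈ {c | ∃ T : Finset (Fin n × Fin n), IsWeakResolving k T ∧ T.card = c},
      n * t - 1 ≤ c := by
    rintro c ⟨T, hT, rfl⟩
    have hpair : ∀ a a' : Fin n, a ≠ a' → k ≤ rcnt T a + rcnt T a' := by
      intro a a' haa
      have := hT (a, 0) (a', 0) (by simp [haa])
      rwa [delta_same_col T a a' 0 haa] at this
    rw [card_eq_sum_rcnt]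
    by_cases hall : ∀ a : Fin n, t ≤ rcnt T a
    · have : (Finset.univ : Finset (Fin n)).card * t ≤ ∑ a : Fin n, rcnt T a := by
        calc (Finset.univ : Finset (Fin n)).card * t = ∑ _a : Fin n, t := by
              rw [Finset.sum_const, smul_eq_mul]
          _ ≤ ∑ a : Fin n, rcnt T a := Finset.sum_le_sum (fun a _ => hall a)
      rw [Finset.card_univ, Fintype.card_fin] at this
      omega
    · push_neg at hall
      obtain ⟨a0, ha0⟩ := hall
      set m := rcnt T a0 with hm
      have hsplit : ∑ a : Fin n, rcnt T a
          = m + ∑ a ∈ Finset.univ.erase a0, rcnt T a := by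
        rw [← Finset.add_sum_erase _ _ (Finset.mem_univ a0)]
      have hrest : (n - 1) * (k - m) ≤ ∑ a ∈ Finset.univ.erase a0, rcnt T a := by
        calc (n - 1) * (k - m) = ∑ _a ∈ Finset.univ.erase a0, (k - m) := by
              rw [Finset.sum_const, smul_eq_mul, Finset.card_erase_of_mem (Finset.mem_univ a0),
                Finset.card_univ, Fintype.card_fin]
          _ ≤ ∑ a ∈ Finset.univ.erase a0, rcnt T a := by
              apply Finset.sum_le_sum
              intro a ha
              have hne : a ≠ a0 := (Finset.mem_erase.mp ha).1
              have := hpair a a0 hne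
              omega
      -- arithmetic: m ≤ t - 1, k = 2t-1
      have hmle : m ≤ t - 1 := by omega
      have hfact1 : (n - 1) * (k - m) = (n - 1) * t + (n - 1) * (t - 1 - m) := by
        rw [← Nat.mul_add]
        congr 1
        omega
      have hfact2 : t - 1 - m ≤ (n - 1) * (t - 1 - m) :=
        Nat.le_mul_of_pos_left _ (by omega)
      have hfact3 : n * t = (n - 1) * t + t := by
        cases n with
        | zero => omega
        | succ n' => simp [Nat.succ_sub_one, Nat.succ_mul]
      omega
  -- Conclude.
  have hmem : n * t - 1 ∈ {c | ∃ T : Finset (Fin n × Fin n), IsWeakResolving k T ∧ T.card = c} :=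
    ⟨S, hres, hcardS⟩
  rw [hkey]
  unfold wdim
  exact le_antisymm (Nat.sInf_le hmem) (le_csInf ⟨_, hmem⟩ hlb)
end
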